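/- In a hidden Markov chain model, the entropies of partial state sequences given a terminal state satisfy the forward recursion of Hernando et al.: for 2 ≤ t ≤ T−1 and every state j with P(S_t = j, X_0^t = x_0^t) > 0, H(S_0^{t−1} | S_t = j, X_0^t = x_0^t) = Σ_i P(S_{t−1} = i | S_t = j, X_0^{t−1} = x_0^{t−1}) { H(S_0^{t−2} | S_{t−1} = i, X_0^{t−1} = x_0^{t−1}) − log P(S_{t−1} = i | S_t = j, X_0^{t−1} = x_0^{t−1}) }, the sum ranging over the states i with P(S_{t−1} = i | S_t = j, X_0^{t−1} = x_0^{t−1}) > 0. -/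

import Mathlib

/-- A hidden Markov chain (HMC) model with `J` states, observation alphabet
`{0, …, V-1}` and sequence length `T`: initial probabilities, transition
probabilities and emission probabilities. -/
structure HMCModel (J V T : ℕ) where
  init : Fin J → ℝ
  trans : Fin J → Fin J → ℝ
  emit : Fin J → Fin V → ℝ
  init_nonneg : ∀ j, 0 ≤ init j
  init_sum : ∑ j, init j = 1
  trans_nonneg : ∀ i j, 0 ≤ trans i j
  trans_sum : ∀ i, ∑ j, trans i j = 1
  emit_nonneg : ∀ j y, 0 ≤ emit j y
  emit_sum : ∀ j, ∑ y, emit j y = 1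

namespace HMCModel

variable {J V T : ℕ} [NeZero J] [NeZero T]

/-- The joint law of the state sequence and the observed sequence:
`P(S = s, X = x) = π_{s_0} b_{s_0}(x_0) ∏_{t=1}^{T-1} p_{s_{t-1} s_t} b_{s_t}(x_t)`. -/
noncomputable def joint (M : HMCModel J V T) (s : Fin T → Fin J) (x : Fin T → Fin V) : ℝ :=
  M.init (s 0) * M.emit (s 0) (x 0) *
    ∏ t ∈ Finset.univ.filter (fun t : Fin T => t ≠ 0),
      M.trans (s (t - 1)) (s t) * M.emit (s t) (x t)

open Classical in
/-- Probability of an event on (state sequence, observed sequence). -/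
noncomputable def pr (M : HMCModel J V T)
    (E : (Fin T → Fin J) → (Fin T → Fin V) → Prop) : ℝ :=
  ∑ s : Fin T → Fin J, ∑ y : Fin T → Fin V, if E s y then M.joint s y else 0

/-- Conditional probability `P(A | B)`; it is `0` when the conditioning event
has probability zero. -/
noncomputable def cpr (M : HMCModel J V T)
    (A B : (Fin T → Fin J) → (Fin T → Fin V) → Prop) : ℝ :=
  if 0 < M.pr B then M.pr (fun s y => A s y ∧ B s y) / M.pr B else 0

/-- Entropy of the random vector `f(S)` given the event `E`
(natural logarithm, with the convention `0 log 0 = 0`). -/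
noncomputable def condEnt (M : HMCModel J V T) {α : Type*} [Fintype α]
    (f : (Fin T → Fin J) → α)
    (E : (Fin T → Fin J) → (Fin T → Fin V) → Prop) : ℝ :=
  -∑ a : α, M.cpr (fun s _ => f s = a) E * Real.log (M.cpr (fun s _ => f s = a) E)

/-- Entropy of `f(S)` given the random vector `g(S)` and the event `E`:
`H(f(S) | g(S), E) = ∑_c P(g(S) = c | E) H(f(S) | g(S) = c, E)`. -/
noncomputable def condEntGiven (M : HMCModel J V T) {α β : Type*} [Fintype α] [Fintype β]
    (f : (Fin T → Fin J) → α) (g : (Fin T → Fin J) → β)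
    (E : (Fin T → Fin J) → (Fin T → Fin V) → Prop) : ℝ :=
  ∑ c : β, M.cpr (fun s _ => g s = c) E * M.condEnt f (fun s y => g s = c ∧ E s y)

/-- The event `X = x`. -/
def obsEq (x : Fin T → Fin V) : (Fin T → Fin J) → (Fin T → Fin V) → Prop :=
  fun _ y => y = x

/-- The partial state vector `S_0^{t-1}` (coordinates `≥ t` are padded by `0`). -/
def prefixVar (t : ℕ) (s : Fin T → Fin J) : Fin T → Fin J :=
  fun r => if (r : ℕ) < t then s r else 0

/-- The partial state vector `S_t^{T-1}` (coordinates `< t` are padded by `0`). -/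
def suffixVar (t : ℕ) (s : Fin T → Fin J) : Fin T → Fin J :=
  fun r => if t ≤ (r : ℕ) then s r else 0

end HMCModel

open HMCModel

/-!
Conditioning on `X_t = x_t` as well only multiplies the probability of every event contained in
`{S_t = j}` by `b_j(x_t)`, so it can be dropped from the left-hand side. Since `S_0^{t-1}` is the
pair `(S_0^{t-2}, S_{t-1})`, the chain rule for entropy then gives the right-hand side, except
that the inner entropies are still conditioned on `S_t = j`. That condition can be dropped by
the Markov property: given `S_{t-1} = i`, adding `S_t = j` multiplies the probability of every
event on `S_0^{t-1}, X_0^{t-1}` by `p_{ij}`, because summing the joint law over the future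
`S_{t+1}, …, S_{T-1}, X_t, …, X_{T-1}` only produces row sums of transition and emission
matrices, which equal one.
-/

open Finset Real Function

lemma Fin.sub_one_lt_of_ne_zero {n : ℕ} [NeZero n] {i : Fin n} (hi : i ≠ 0) : i - 1 < i := by
  rw [Fin.lt_def, Fin.val_sub_one_of_ne_zero hi]
  exact Nat.sub_one_lt (Fin.val_ne_zero_iff.2 hi)

section UpdateSum

variable {ι β : Type*} [Fintype ι] [DecidableEq ι] [Fintype β]

lemma card_mul_sum_eq_sum_sum_update (c : ι) (H : (ι → β) → ℝ) :
    Fintype.card β * ∑ s, H s = ∑ s, ∑ v, H (update s c v) := by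
  let e := Equiv.funSplitAt c β
  have hupd : ∀ a v r, update (e.symm (a, r)) c v = e.symm (v, r) := by
    intro a v r
    funext k
    by_cases hk : k = c
    · subst hk; simp [e]
    · simp [e, hk]
  rw [← e.symm.sum_comp, ← e.symm.sum_comp]
  simp only [Fintype.sum_prod_type, hupd]
  rw [Finset.sum_const, Finset.card_univ, nsmul_eq_mul, Finset.sum_comm]

lemma card_mul_sum_mul_apply_eq_sum (c : ι) {F : (ι → β) → ℝ} {φ : (ι → β) → β → ℝ}
    (hF : DependsOn F {c}ᶜ) (hφ : DependsOn φ {c}ᶜ) (hφ_sum : ∀ s, ∑ v, φ s v = 1) :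
    Fintype.card β * ∑ s, F s * φ s (s c) = ∑ s, F s := by
  have hupd : ∀ (s : ι → β) v i, i ∈ ({c}ᶜ : Set ι) → update s c v i = s i :=
    fun s v i hi => update_of_ne hi _ _
  simp only [card_mul_sum_eq_sum_sum_update c, update_self, hF (hupd _ _), hφ (hupd _ _),
    ← Finset.mul_sum, hφ_sum, mul_one]

lemma card_mul_sum_ite_eq_sum [DecidableEq β] (c : ι) (b : β) {F : (ι → β) → ℝ}
    (hF : DependsOn F {c}ᶜ) :
    Fintype.card β * ∑ s, (if s c = b then F s else 0) = ∑ s, F s := by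
  simpa [mul_ite] using card_mul_sum_mul_apply_eq_sum c (φ := fun _ v => if v = b then 1 else 0)
    hF (fun _ _ _ => rfl) (fun _ => by simp)

end UpdateSum

namespace HMCModel

variable {J V T : ℕ} (M : HMCModel J V T) (x : Fin T → Fin V)

lemma sum_obs_prod_emit (c : Fin T → Prop) [DecidablePred c] (s : Fin T → Fin J) :
    (∑ y : Fin T → Fin V, if ∀ r, c r → y r = x r then ∏ r, M.emit (s r) (y r) else 0) =
      ∏ r ∈ univ.filter c, M.emit (s r) (x r) := by
  have hprod : ∀ y : Fin T → Fin V,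
      (if ∀ r, c r → y r = x r then ∏ r, M.emit (s r) (y r) else 0) =
        ∏ r, if c r → y r = x r then M.emit (s r) (y r) else 0 :=
    fun y => by convert Fintype.prod_ite_zero.symm
  rw [sum_congr rfl fun y _ => hprod y,
    ← Fintype.prod_sum (fun r v => if c r → v = x r then M.emit (s r) v else 0), prod_filter]
  refine prod_congr rfl fun r _ => ?_
  by_cases hr : c r
  · simp [hr]
  · simp [hr, M.emit_sum]

lemma prefixVar_eq_prefixVar_iff [NeZero J] (k : ℕ) (s s' : Fin T → Fin J) :
    prefixVar k s = prefixVar k s' ↔ ∀ r : Fin T, (r : ℕ) < k → s r = s' r := by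
  simp only [funext_iff, prefixVar]
  refine ⟨fun h r hr => by simpa [hr] using h r, fun h r => ?_⟩
  split_ifs with hr
  exacts [h r hr, rfl]

variable [NeZero T]

lemma joint_nonneg (s : Fin T → Fin J) (y : Fin T → Fin V) : 0 ≤ M.joint s y :=
  mul_nonneg (mul_nonneg (M.init_nonneg _) (M.emit_nonneg _ _))
    (prod_nonneg fun _ _ => mul_nonneg (M.trans_nonneg _ _) (M.emit_nonneg _ _))

lemma pr_nonneg (E : (Fin T → Fin J) → (Fin T → Fin V) → Prop) : 0 ≤ M.pr E :=
  sum_nonneg fun s _ => sum_nonneg fun y _ => by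
    split_ifs
    exacts [M.joint_nonneg s y, le_rfl]

lemma pr_mono {A B : (Fin T → Fin J) → (Fin T → Fin V) → Prop} (h : ∀ s y, A s y → B s y) :
    M.pr A ≤ M.pr B :=
  sum_le_sum fun s _ => sum_le_sum fun y _ => by
    split_ifs with hA hB hB
    exacts [le_rfl, absurd (h s y hA) hB, M.joint_nonneg s y, le_rfl]

lemma pr_and_eq_sum_pr_eq (P : (Fin T → Fin J) → Prop) [DecidablePred P]
    (E : (Fin T → Fin J) → (Fin T → Fin V) → Prop) :
    M.pr (fun s y => P s ∧ E s y) = ∑ s ∈ univ.filter P, M.pr (fun s' y => s' = s ∧ E s' y) := by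
  classical
  have hpoint : ∀ s,
      M.pr (fun s' y => s' = s ∧ E s' y) = ∑ y, if E s y then M.joint s y else 0 := by
    intro s
    rw [pr, Fintype.sum_eq_single s]
    · simp
    · exact fun s' hs' => sum_eq_zero fun y _ => if_neg fun h => hs' h.1
  rw [sum_congr rfl fun s _ => hpoint s, sum_filter, pr]
  refine sum_congr rfl fun s _ => ?_
  by_cases hP : P s <;> simp [hP]

lemma sum_pr_fiber {α : Type*} [Fintype α] [DecidableEq α] (f : (Fin T → Fin J) → α)
    (E : (Fin T → Fin J) → (Fin T → Fin V) → Prop) :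
    ∑ a, M.pr (fun s y => f s = a ∧ E s y) = M.pr E := by
  simp only [M.pr_and_eq_sum_pr_eq (fun s => f s = _), sum_fiberwise]
  simpa using (M.pr_and_eq_sum_pr_eq (fun _ => True) E).symm

lemma pr_pos_of_cpr_pos {A B : (Fin T → Fin J) → (Fin T → Fin V) → Prop} (h : 0 < M.cpr A B) :
    0 < M.pr (fun s y => A s y ∧ B s y) := by
  refine (M.pr_nonneg _).lt_of_ne fun h0 => ?_
  simp [cpr, ← h0] at h

lemma cpr_nonneg (A B : (Fin T → Fin J) → (Fin T → Fin V) → Prop) : 0 ≤ M.cpr A B := by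
  unfold cpr
  split_ifs with hB
  exacts [div_nonneg (M.pr_nonneg _) hB.le, le_rfl]

lemma cpr_eq_sum_cpr_eq (P : (Fin T → Fin J) → Prop) [DecidablePred P]
    (E : (Fin T → Fin J) → (Fin T → Fin V) → Prop) :
    M.cpr (fun s _ => P s) E = ∑ s ∈ univ.filter P, M.cpr (fun s' _ => s' = s) E := by
  unfold cpr
  split_ifs
  · rw [pr_and_eq_sum_pr_eq, sum_div]
  · simp

lemma sum_cpr_eq_one {α : Type*} [Fintype α] [DecidableEq α] (f : (Fin T → Fin J) → α)
    {E : (Fin T → Fin J) → (Fin T → Fin V) → Prop} (hE : 0 < M.pr E) :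
    ∑ a, M.cpr (fun s _ => f s = a) E = 1 := by
  simp only [cpr, hE, if_true, ← sum_div, sum_pr_fiber, div_self hE.ne']

lemma cpr_and_eq_mul (A B E : (Fin T → Fin J) → (Fin T → Fin V) → Prop) :
    M.cpr (fun s y => A s y ∧ B s y) E = M.cpr B E * M.cpr A (fun s y => B s y ∧ E s y) := by
  unfold cpr
  by_cases hE : 0 < M.pr E
  · by_cases hBE : 0 < M.pr (fun s y => B s y ∧ E s y)
    · simp only [hE, hBE, if_true, and_assoc]
      field_simp
    · have hzero : M.pr (fun s y => (A s y ∧ B s y) ∧ E s y) = 0 :=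
        le_antisymm ((M.pr_mono fun s y h => ⟨h.1.2, h.2⟩).trans (not_lt.1 hBE))
          (M.pr_nonneg _)
      simp [hE, hBE, hzero]
  · simp [hE]

lemma cpr_eq_of_pr_eq_mul {A B B' : (Fin T → Fin J) → (Fin T → Fin V) → Prop} {c : ℝ}
    (hB : 0 < M.pr B) (hBB' : M.pr B = c * M.pr B')
    (hAB : M.pr (fun s y => A s y ∧ B s y) = c * M.pr (fun s y => A s y ∧ B' s y)) :
    M.cpr A B = M.cpr A B' := by
  have hB' : 0 < M.pr B' := (M.pr_nonneg B').lt_of_ne fun h => by simp [← h, hBB'] at hB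
  have hc : c ≠ 0 := by rintro rfl; simp [hBB'] at hB
  rw [cpr, cpr, if_pos hB, if_pos hB', hBB', hAB, mul_div_mul_left _ _ hc]

lemma condEnt_eq_neg_sum_cpr_mul_log {α : Type*} [Fintype α] [DecidableEq α]
    (f : (Fin T → Fin J) → α) (E : (Fin T → Fin J) → (Fin T → Fin V) → Prop) :
    M.condEnt f E =
      -∑ s, M.cpr (fun s' _ => s' = s) E * log (M.cpr (fun s' _ => f s' = f s) E) := by
  rw [condEnt, neg_inj, ← sum_fiberwise univ f]
  refine sum_congr rfl fun a _ => ?_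
  calc _ = (∑ s ∈ univ.filter (fun s => f s = a), M.cpr (fun s' _ => s' = s) E) *
          log (M.cpr (fun s' _ => f s' = a) E) := by rw [← M.cpr_eq_sum_cpr_eq]
    _ = _ := by
      rw [sum_mul]
      exact sum_congr rfl fun s hs => by rw [(mem_filter.1 hs).2]

lemma condEnt_congr {α β : Type*} [Fintype α] [Fintype β] {f : (Fin T → Fin J) → α}
    {g : (Fin T → Fin J) → β} (h : ∀ s s', f s = f s' ↔ g s = g s')
    (E : (Fin T → Fin J) → (Fin T → Fin V) → Prop) :
    M.condEnt f E = M.condEnt g E := by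
  classical
  simp only [condEnt_eq_neg_sum_cpr_mul_log, h]

lemma condEnt_eq_sum_negMulLog {α : Type*} [Fintype α] (f : (Fin T → Fin J) → α)
    (E : (Fin T → Fin J) → (Fin T → Fin V) → Prop) :
    M.condEnt f E = ∑ a, negMulLog (M.cpr (fun s _ => f s = a) E) := by
  simp [condEnt, negMulLog]

lemma condEnt_prod_eq {α β : Type*} [Fintype α] [Fintype β] [DecidableEq α]
    (f : (Fin T → Fin J) → α) (g : (Fin T → Fin J) → β)
    (E : (Fin T → Fin J) → (Fin T → Fin V) → Prop) :
    M.condEnt (fun s => (f s, g s)) E =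
      ∑ i, M.cpr (fun s _ => g s = i) E *
        (M.condEnt f (fun s y => g s = i ∧ E s y) - log (M.cpr (fun s _ => g s = i) E)) := by
  simp only [condEnt_eq_sum_negMulLog, Fintype.sum_prod_type_right, Prod.mk.injEq]
  refine sum_congr rfl fun i _ => ?_
  simp only [M.cpr_and_eq_mul, negMulLog_mul, sum_add_distrib, ← sum_mul, ← mul_sum]
  by_cases hi : 0 < M.pr (fun s y => g s = i ∧ E s y)
  · rw [M.sum_cpr_eq_one f hi, negMulLog]
    ring
  · have hzero : M.cpr (fun s _ => g s = i) E = 0 := by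
      have := le_antisymm (not_lt.1 hi) (M.pr_nonneg _)
      simp [cpr, this]
    simp [hzero]

lemma condEnt_eq_of_pr_eq_mul {α : Type*} [Fintype α] (f : (Fin T → Fin J) → α)
    {B B' : (Fin T → Fin J) → (Fin T → Fin V) → Prop} {c : ℝ}
    (hB : 0 < M.pr B) (hBB' : M.pr B = c * M.pr B')
    (h : ∀ a, M.pr (fun s y => f s = a ∧ B s y) = c * M.pr (fun s y => f s = a ∧ B' s y)) :
    M.condEnt f B = M.condEnt f B' := by
  simp only [condEnt, M.cpr_eq_of_pr_eq_mul hB hBB' (h _)]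

/-- `P(S_0^{m-1} = s_0^{m-1})`, for `1 ≤ m ≤ T`. -/
noncomputable def pathProb (m : ℕ) (s : Fin T → Fin J) : ℝ :=
  M.init (s 0) *
    ∏ r ∈ univ.filter (fun r : Fin T => r ≠ 0 ∧ (r : ℕ) < m), M.trans (s (r - 1)) (s r)

lemma joint_eq_pathProb_mul (s : Fin T → Fin J) (y : Fin T → Fin V) :
    M.joint s y = M.pathProb T s * ∏ r, M.emit (s r) (y r) := by
  have hfilter : univ.filter (fun r : Fin T => r ≠ 0 ∧ (r : ℕ) < T) = univ.erase 0 := by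
    ext r; simp
  rw [joint, pathProb, prod_mul_distrib, filter_ne', hfilter,
    ← mul_prod_erase univ (fun r => M.emit (s r) (y r)) (mem_univ 0)]
  ring

lemma pathProb_succ {c : Fin T} (hc : c ≠ 0) (s : Fin T → Fin J) :
    M.pathProb (c + 1) s = M.pathProb c s * M.trans (s (c - 1)) (s c) := by
  have hfilter : univ.filter (fun r : Fin T => r ≠ 0 ∧ (r : ℕ) < c + 1) =
      insert c (univ.filter (fun r : Fin T => r ≠ 0 ∧ (r : ℕ) < c)) := by
    ext r
    simp only [mem_filter, mem_univ, true_and, mem_insert, Nat.lt_succ_iff_lt_or_eq, Fin.val_inj]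
    constructor
    · rintro ⟨h0, h | rfl⟩ <;> simp_all
    · rintro (rfl | ⟨h0, h⟩) <;> simp_all
  rw [pathProb, pathProb, hfilter, prod_insert (by simp), mul_comm (M.trans _ _), mul_assoc]

lemma dependsOn_pathProb {m : ℕ} (hm : 1 ≤ m) :
    DependsOn (M.pathProb m) {r : Fin T | (r : ℕ) < m} := by
  intro s s' h
  have hpred : ∀ r : Fin T, r ≠ 0 → (r : ℕ) < m → ((r - 1 : Fin T) : ℕ) < m := fun r hr hrm => by
    rw [Fin.val_sub_one_of_ne_zero hr]; omega
  rw [pathProb, pathProb, h 0 (by simp; omega)]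
  refine congrArg _ (prod_congr rfl fun r hr => ?_)
  obtain ⟨hr0, hrm⟩ := (mem_filter.1 hr).2
  rw [h r hrm, h _ (hpred r hr0 hrm)]

lemma pr_and_obs (P : (Fin T → Fin J) → Prop) [DecidablePred P] (c : Fin T → Prop)
    [DecidablePred c] :
    M.pr (fun s y => P s ∧ ∀ r, c r → y r = x r) =
      ∑ s, if P s then M.pathProb T s * ∏ r ∈ univ.filter c, M.emit (s r) (x r) else 0 := by
  rw [pr]
  refine sum_congr rfl fun s _ => ?_
  by_cases hP : P s
  · rw [if_pos hP, ← sum_obs_prod_emit, mul_sum]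
    refine sum_congr rfl fun y _ => ?_
    rw [joint_eq_pathProb_mul]
    split_ifs <;> simp_all
  · simp [hP]

/-- Summing out the states `S_m, …, S_{T-1}`: in `pathProb T` each of them contributes a row sum
`∑ v, p u v = 1`, whereas `F * pathProb m` does not depend on them, so its sum counts every value
`J ^ (T - m)` times. -/
lemma card_pow_mul_sum_mul_pathProb (F : (Fin T → Fin J) → ℝ) {m : ℕ} (hm : 1 ≤ m)
    (hmT : m ≤ T) (hF : DependsOn F {r : Fin T | (r : ℕ) < m}) :
    (J : ℝ) ^ (T - m) * ∑ s, F s * M.pathProb T s = ∑ s, F s * M.pathProb m s := by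
  induction hd : T - m generalizing m with
  | zero =>
    obtain rfl : m = T := by omega
    simp
  | succ d ih =>
    set c : Fin T := ⟨m, by omega⟩
    have hc : c ≠ 0 := Fin.ne_of_val_ne (by simp [c]; omega)
    have hc1 : c - 1 ≠ c := (Fin.sub_one_lt_of_ne_zero hc).ne
    have hprefix : {r : Fin T | (r : ℕ) < m} ⊆ {c}ᶜ := fun r hr hrc => by
      simp only [Set.mem_singleton_iff] at hrc; subst hrc; simp [c] at hr
    have hstep := card_mul_sum_mul_apply_eq_sum c (F := fun s => F s * M.pathProb m s)
      (φ := fun s v => M.trans (s (c - 1)) v)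
      (fun s s' h => by
        simp only [(hF.mono hprefix) h, ((M.dependsOn_pathProb hm).mono hprefix) h])
      (fun s s' h => by simp only [h (c - 1) hc1]) (fun s => M.trans_sum _)
    rw [pow_succ', mul_assoc, ih (m := m + 1) (by omega) (by omega)
      (hF.mono fun r (hr : (r : ℕ) < m) => show (r : ℕ) < m + 1 by omega) (by omega), ← hstep]
    have hsucc : ∀ s, M.pathProb (m + 1) s = M.pathProb m s * M.trans (s (c - 1)) (s c) :=
      M.pathProb_succ hc
    simp only [Fintype.card_fin, hsucc, mul_assoc]

lemma sum_ite_mul_pathProb [NeZero J] {G : (Fin T → Fin J) → ℝ} {t : Fin T}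
    (hG : DependsOn G (Set.Iio t)) (ht : t ≠ 0) (j : Fin J) :
    ∑ s, (if s t = j then G s else 0) * M.pathProb T s =
      ∑ s, G s * M.trans (s (t - 1)) j * M.pathProb T s := by
  have ht1 : 1 ≤ (t : ℕ) := Nat.one_le_iff_ne_zero.2 (Fin.val_ne_zero_iff.2 ht)
  have hlast := Fin.sub_one_lt_of_ne_zero ht
  have hpast : {r : Fin T | (r : ℕ) < t} ⊆ {t}ᶜ := fun r hr hrt => by
    simp only [Set.mem_singleton_iff] at hrt; subst hrt; simp at hr
  set H : (Fin T → Fin J) → ℝ := fun s => G s * M.trans (s (t - 1)) j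
  have hH : DependsOn H (Set.Iio t) := fun s s' h => by simp only [H, hG h, h _ hlast]
  have hGj : DependsOn (fun s => if s t = j then G s else 0) {r : Fin T | (r : ℕ) < t + 1} :=
    fun s s' h => by
      simp only [h t (Nat.lt_succ_self _), hG fun r (hr : r < t) => h r (Nat.lt_succ_of_lt hr)]
  have hHw : DependsOn (fun s => H s * M.pathProb t s) {t}ᶜ := fun s s' h => by
    simp only [(hH.mono hpast) h, ((M.dependsOn_pathProb ht1).mono hpast) h]
  have hsum := card_mul_sum_ite_eq_sum t j hHw
  rw [Fintype.card_fin] at hsum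
  refine mul_left_cancel₀ (pow_ne_zero (T - t) (Nat.cast_ne_zero.2 (NeZero.ne J))) ?_
  calc (J : ℝ) ^ (T - t) * ∑ s, (if s t = j then G s else 0) * M.pathProb T s
      = J * ((J : ℝ) ^ (T - (t + 1)) * ∑ s, (if s t = j then G s else 0) * M.pathProb T s) := by
        rw [show T - t = T - (t + 1) + 1 by omega, pow_succ']; ring
    _ = J * ∑ s, if s t = j then H s * M.pathProb t s else 0 := by
        rw [M.card_pow_mul_sum_mul_pathProb _ (by omega) t.isLt hGj]
        refine congrArg _ (sum_congr rfl fun s _ => ?_)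
        rw [M.pathProb_succ ht]
        split_ifs with h
        · simp only [H, h]; ring
        · simp
    _ = (J : ℝ) ^ (T - t) * ∑ s, H s * M.pathProb T s := by
        rw [hsum, M.card_pow_mul_sum_mul_pathProb H ht1 t.isLt.le hH]

lemma pr_and_obs_le (P : (Fin T → Fin J) → Prop) (t : Fin T) (j : Fin J) :
    M.pr (fun s y => P s ∧ s t = j ∧ ∀ r, r ≤ t → y r = x r) =
      M.emit j (x t) * M.pr (fun s y => P s ∧ s t = j ∧ ∀ r, r < t → y r = x r) := by
  classical
  have hle := M.pr_and_obs x (fun s => P s ∧ s t = j) (· ≤ t)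
  have hlt := M.pr_and_obs x (fun s => P s ∧ s t = j) (· < t)
  simp only [and_assoc] at hle hlt
  rw [hle, hlt, mul_sum, filter_ge_eq_Iic, filter_gt_eq_Iio]
  refine sum_congr rfl fun s _ => ?_
  split_ifs with h
  · rw [← Iio_insert, prod_insert notMem_Iio_self, h.2]; ring
  · simp

lemma pr_and_trans [NeZero J] {P : (Fin T → Fin J) → Prop} {t : Fin T}
    (hP : DependsOn P (Set.Iio t)) (ht : t ≠ 0) (i j : Fin J) :
    M.pr (fun s y => P s ∧ s (t - 1) = i ∧ s t = j ∧ ∀ r, r < t → y r = x r) =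
      M.trans i j * M.pr (fun s y => P s ∧ s (t - 1) = i ∧ ∀ r, r < t → y r = x r) := by
  classical
  have hlhs := M.pr_and_obs x (fun s => (P s ∧ s (t - 1) = i) ∧ s t = j) (· < t)
  have hrhs := M.pr_and_obs x (fun s => P s ∧ s (t - 1) = i) (· < t)
  simp only [and_assoc] at hlhs hrhs
  set G : (Fin T → Fin J) → ℝ := fun s =>
    if P s ∧ s (t - 1) = i then ∏ r ∈ univ.filter (· < t), M.emit (s r) (x r) else 0
  have hG : DependsOn G (Set.Iio t) := fun s s' h => by
    simp only [G, show P s = P s' from hP h, h _ (Fin.sub_one_lt_of_ne_zero ht)]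
    rw [prod_congr rfl fun r hr => by rw [h r (mem_filter.1 hr).2]]
  rw [hlhs, hrhs, mul_sum]
  calc _ = ∑ s, (if s t = j then G s else 0) * M.pathProb T s :=
        sum_congr rfl fun s _ => by simp only [G]; split_ifs <;> simp_all [mul_comm]
    _ = ∑ s, G s * M.trans (s (t - 1)) j * M.pathProb T s := M.sum_ite_mul_pathProb hG ht j
    _ = _ := sum_congr rfl fun s _ => by
        simp only [G]
        split_ifs with h
        · rw [h.2]; ring
        · simp

lemma prefixVar_eq_prefixVar_iff_of_ne_zero [NeZero J] {t : Fin T} (ht : t ≠ 0)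
    (s s' : Fin T → Fin J) :
    prefixVar t s = prefixVar t s' ↔
      prefixVar ((t : ℕ) - 1) s = prefixVar ((t : ℕ) - 1) s' ∧ s (t - 1) = s' (t - 1) := by
  have hval := Fin.val_sub_one_of_ne_zero ht
  have ht1 := Fin.val_ne_zero_iff.2 ht
  simp only [prefixVar_eq_prefixVar_iff]
  refine ⟨fun h => ⟨fun r hr => h r (by omega), h _ (by omega)⟩, fun ⟨h, hlast⟩ r hr => ?_⟩
  by_cases hr' : (r : ℕ) < t - 1
  · exact h r hr'
  · obtain rfl : r = t - 1 := Fin.ext (by omega)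
    exact hlast

end HMCModel

/-- In a hidden Markov chain model, the entropies of partial state
sequences given a terminal state satisfy the forward recursion of Hernando et al.:
for `2 ≤ t ≤ T-1` and every state `j` with `P(S_t = j, X_0^t = x_0^t) > 0`,
`H(S_0^{t-1} | S_t = j, X_0^t = x_0^t)
   = ∑_i P(S_{t-1} = i | S_t = j, X_0^{t-1} = x_0^{t-1})
       { H(S_0^{t-2} | S_{t-1} = i, X_0^{t-1} = x_0^{t-1})
         − log P(S_{t-1} = i | S_t = j, X_0^{t-1} = x_0^{t-1}) }`,
the sum ranging over the states `i` with positive conditional probability. -/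
theorem hmc_hernando_forward_recursion
    {J V T : ℕ} [NeZero J] [NeZero T] (M : HMCModel J V T)
    (x : Fin T → Fin V) (t : Fin T) (ht : 2 ≤ (t : ℕ)) (j : Fin J)
    (hpos : 0 < M.pr (fun s y => s t = j ∧ ∀ r : Fin T, r ≤ t → y r = x r))
    (q : Fin J → ℝ)
    (hq : ∀ i, q i = M.cpr (fun s _ => s (t - 1) = i)
        (fun s y => s t = j ∧ ∀ r : Fin T, r < t → y r = x r)) :
    M.condEnt (prefixVar (t : ℕ))
        (fun s y => s t = j ∧ ∀ r : Fin T, r ≤ t → y r = x r)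
      = ∑ i ∈ Finset.univ.filter (fun i : Fin J => 0 < q i),
          q i * (M.condEnt (prefixVar ((t : ℕ) - 1))
                    (fun s y => s (t - 1) = i ∧ ∀ r : Fin T, r < t → y r = x r)
                 - Real.log (q i)) := by
  have ht0 : t ≠ 0 := Fin.val_ne_zero_iff.1 (by omega)
  rw [M.condEnt_eq_of_pr_eq_mul _ hpos (by simpa using M.pr_and_obs_le x (fun _ => True) t j)
      fun a => M.pr_and_obs_le x (fun s => prefixVar t s = a) t j,
    M.condEnt_congr (g := fun s => (prefixVar ((t : ℕ) - 1) s, s (t - 1)))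
      fun s s' => (prefixVar_eq_prefixVar_iff_of_ne_zero ht0 s s').trans Prod.mk_inj.symm,
    M.condEnt_prod_eq]
  simp only [hq]
  refine (sum_filter_of_ne fun i _ h => ?_).symm.trans (sum_congr rfl fun i hi => ?_)
  · exact (M.cpr_nonneg _ _).lt_of_ne (left_ne_zero_of_mul h).symm
  have hBpos := M.pr_pos_of_cpr_pos (mem_filter.1 hi).2
  have hdep : ∀ b : Fin T → Fin J,
      DependsOn (fun s => prefixVar ((t : ℕ) - 1) s = b) (Set.Iio t) := fun b s s' h =>
    congrArg (· = b) ((prefixVar_eq_prefixVar_iff _ s s').2 fun r hr =>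
      h r (show (r : ℕ) < t by omega))
  rw [M.condEnt_eq_of_pr_eq_mul _ hBpos
      (by simpa using M.pr_and_trans x (fun _ _ _ => rfl : DependsOn (fun _ => True) _) ht0 i j)
      fun b => M.pr_and_trans x (hdep b) ht0 i j]
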